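/- Let I be a monomial ideal generated in degree d and u a monomial of degree d−1. Then I : u is generated by variables if and only if there exists a subset A of [n] such that u·x_i ∈ G(I) for all i ∈ A and for every v ∈ G(I), supp(lcm(v,u)/u) ∩ A ≠ ∅. -/

import Mathlib

open MvPolynomial

/-- The monomial `x^u` in the polynomial ring `K[x_i : i ∈ σ]`. -/
noncomputable def mon (K : Type) [Field K] {σ : Type} (u : σ →₀ ℕ) :
    MvPolynomial σ K := MvPolynomial.monomial u 1

/-- Total degree of an exponent vector. -/
def mdeg {σ : Type} (u : σ →₀ ℕ) : ℕ := u.sum fun _ e => e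

/-- The monomial ideal generated by the monomials with exponent vectors in `S`. -/
noncomputable def monIdeal (K : Type) [Field K] {σ : Type} (S : Set (σ →₀ ℕ)) :
    Ideal (MvPolynomial σ K) := Ideal.span ((mon K) '' S)

/-- An ideal is generated by variables. -/
def genByVars {K : Type} [Field K] {σ : Type} (J : Ideal (MvPolynomial σ K)) : Prop :=
  ∃ A : Set σ, J = Ideal.span ((fun i => (X i : MvPolynomial σ K)) '' A)

/-- An ideal is generated by linear forms. -/
def genByLinForms {K : Type} [Field K] {σ : Type} (J : Ideal (MvPolynomial σ K)) : Prop :=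
  ∃ S : Set (MvPolynomial σ K), (∀ f ∈ S, f.IsHomogeneous 1) ∧ J = Ideal.span S

/-- `S` is an antichain under divisibility of monomials, i.e. it is the minimal
monomial generating set `G(I)` of the monomial ideal `I` it generates. -/
def IsMinGenSet {σ : Type} (S : Set (σ →₀ ℕ)) : Prop :=
  ∀ u ∈ S, ∀ v ∈ S, u ≤ v → u = v

/-- A monomial ideal, presented by its minimal monomial generating set `S`, is
quasi-linear if for every `u ∈ S` the colon ideal `(G(I) \ {u}) : u` is generated
by variables. -/
def QuasiLinear (K : Type) [Field K] {σ : Type} (S : Set (σ →₀ ℕ)) : Prop :=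
  ∀ u ∈ S, genByVars (Submodule.colon (monIdeal K (S \ {u})) (Ideal.span {mon K u}))

/-- A minimal graded free resolution of an ideal `I` in a polynomial ring:
graded free modules `F i = ⊕_k R(-dg i k)` of rank `b i`, differentials
`F (i+1) → F i` given by the matrices `A i`, whose entries are homogeneous of the
appropriate degree and of positive degree (this is minimality, i.e. all entries lie
in the graded maximal ideal), together with an augmentation `F 0 → I` given by the
homogeneous generators `g`, everything being exact. -/
structure MinFreeRes {K : Type} [Field K] {σ : Type} (I : Ideal (MvPolynomial σ K)) where
  b : ℕ → ℕ
  dg : (i : ℕ) → Fin (b i) → ℕ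
  g : Fin (b 0) → MvPolynomial σ K
  A : (i : ℕ) → Matrix (Fin (b i)) (Fin (b (i+1))) (MvPolynomial σ K)
  g_hom : ∀ k, (g k).IsHomogeneous (dg 0 k)
  A_hom : ∀ i k l, A i k l = 0 ∨
    ((A i k l).IsHomogeneous (dg (i+1) l - dg i k) ∧ dg i k < dg (i+1) l)
  aug_range : LinearMap.range (Fintype.linearCombination (MvPolynomial σ K)
      g) = I
  aug_exact : LinearMap.ker (Fintype.linearCombination (MvPolynomial σ K)
      g) = LinearMap.range ((A 0).mulVecLin)
  is_exact : ∀ i, LinearMap.ker ((A i).mulVecLin) = LinearMap.range ((A (i+1)).mulVecLin)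

/-- The graded Betti number `β_{i,j}` read off from a minimal graded free resolution:
the number of generators of the `i`-th free module of degree `j`. -/
noncomputable def MinFreeRes.beta {K : Type} [Field K] {σ : Type}
    {I : Ideal (MvPolynomial σ K)} (res : MinFreeRes I) (i j : ℕ) : ℕ :=
  (Finset.univ.filter fun k => res.dg i k = j).card

/-- `I` has a `d`-linear resolution: it has a minimal graded free resolution in which the
`i`-th free module is generated entirely in degree `i + d`, i.e. `β_{i,j}(I) = 0`
whenever `j - i ≠ d`. -/
def HasLinRes {K : Type} [Field K] {σ : Type} (I : Ideal (MvPolynomial σ K))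
    (d : ℕ) : Prop :=
  ∃ res : MinFreeRes I, ∀ i k, res.dg i k = i + d

/-- `reg I ≤ r`: a minimal graded free resolution of `I` has all generators of the
`i`-th free module in degrees `≤ i + r`, i.e. `β_{i,j}(I) = 0` whenever `j - i > r`. -/
def RegLE {K : Type} [Field K] {σ : Type} (I : Ideal (MvPolynomial σ K)) (r : ℕ) : Prop :=
  ∃ res : MinFreeRes I, ∀ i k, res.dg i k ≤ i + r

/-!
`I : u` is the monomial ideal generated by the `lcm(v, u) / u`, `v ∈ G(I)`, and two monomial ideals
agree iff each generator of one is divisible by a generator of the other. So `I : u = (x_i : i ∈ A)`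
says that every `lcm(v, u) / u` has a variable of `A` in its support, and that every `x_i`, `i ∈ A`,
is divisible by some `lcm(v, u) / u`; as `deg v = deg u + 1`, the latter forces `v = u x_i`.
-/

namespace Finsupp

variable {σ : Type}

lemma eq_of_le_of_degree_le {v w : σ →₀ ℕ} (h : v ≤ w) (hdeg : w.degree ≤ v.degree) : v = w := by
  obtain ⟨c, rfl⟩ := exists_add_of_le h
  have hc : c.degree = 0 := by rw [map_add] at hdeg; omega
  rw [(degree_eq_zero_iff c).1 hc, add_zero]

lemma sup_tsub_le_single_one_iff {u v : σ →₀ ℕ} {i : σ} (hv : v.degree = u.degree + 1) :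
    v ⊔ u - u ≤ single i 1 ↔ v = u + single i 1 := by
  rw [tsub_le_iff_right, sup_le_iff, add_comm]
  constructor
  · rintro ⟨hle, -⟩
    exact eq_of_le_of_degree_le hle (by simp [hv])
  · rintro rfl
    exact ⟨le_rfl, le_self_add⟩

end Finsupp

section MonomialIdeal

variable {K : Type} [Field K] {σ : Type}

lemma mdeg_eq_degree (u : σ →₀ ℕ) : mdeg u = u.degree := rfl

lemma support_mul_mon (f : MvPolynomial σ K) (u : σ →₀ ℕ) :
    (f * mon K u).support = f.support.map (addRightEmbedding u) :=
  AddMonoidAlgebra.support_coeff_mul_single f _ (by simp) _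

lemma mem_monIdeal_iff {S : Set (σ →₀ ℕ)} {f : MvPolynomial σ K} :
    f ∈ monIdeal K S ↔ ∀ m ∈ f.support, ∃ v ∈ S, v ≤ m :=
  mem_ideal_span_monomial_image

lemma mon_mem_monIdeal_iff {S : Set (σ →₀ ℕ)} {m : σ →₀ ℕ} :
    mon K m ∈ monIdeal K S ↔ ∃ v ∈ S, v ≤ m := by
  classical
  rw [mem_monIdeal_iff, mon, support_monomial, if_neg one_ne_zero]
  simp only [Finset.mem_singleton, forall_eq]

lemma monIdeal_le_monIdeal_iff {S T : Set (σ →₀ ℕ)} :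
    monIdeal K S ≤ monIdeal K T ↔ ∀ w ∈ S, ∃ v ∈ T, v ≤ w := by
  rw [monIdeal, Ideal.span_le, Set.image_subset_iff]
  exact forall₂_congr fun _ _ => mon_mem_monIdeal_iff

lemma span_X_image_eq_monIdeal (A : Set σ) :
    Ideal.span (X '' A) = monIdeal K ((Finsupp.single · 1) '' A) := by
  rw [monIdeal, Set.image_image]
  rfl

lemma colon_span_mon (S : Set (σ →₀ ℕ)) (u : σ →₀ ℕ) :
    Submodule.colon (monIdeal K S) (Ideal.span {mon K u}) =
      monIdeal K ((fun v => v ⊔ u - u) '' S) := by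
  ext f
  rw [← Ideal.submodule_span_eq, Submodule.mem_colon_span_singleton, smul_eq_mul,
    mem_monIdeal_iff, mem_monIdeal_iff, support_mul_mon]
  simp only [Finset.forall_mem_map, addRightEmbedding_apply, Set.exists_mem_image,
    tsub_le_iff_right, sup_le_iff, le_add_self, and_true]

end MonomialIdeal

theorem stmt_13_general {K : Type} [Field K] {n d : ℕ} (hd : 1 ≤ d) (S : Set (Fin n →₀ ℕ))
    (hdeg : ∀ v ∈ S, mdeg v = d)
    (u : Fin n →₀ ℕ) (hu : mdeg u = d - 1) :
    genByVars (Submodule.colon (monIdeal K S) (Ideal.span {mon K u}))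
    ↔ ∃ A : Set (Fin n), (∀ i ∈ A, u + Finsupp.single i 1 ∈ S) ∧
        ∀ v ∈ S, ∃ i ∈ A, i ∈ ((v ⊔ u) - u).support := by
  have hdegree : ∀ v ∈ S, v.degree = u.degree + 1 := fun v hv => by
    rw [← mdeg_eq_degree, ← mdeg_eq_degree, hdeg v hv, hu]
    omega
  rw [genByVars, colon_span_mon]
  refine exists_congr fun A => ?_
  rw [span_X_image_eq_monIdeal, le_antisymm_iff, monIdeal_le_monIdeal_iff,
    monIdeal_le_monIdeal_iff, and_comm]
  simp only [Set.forall_mem_image, Set.exists_mem_image, Finsupp.single_le_iff,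
    Nat.one_le_iff_ne_zero, Finsupp.mem_support_iff]
  refine and_congr (forall₂_congr fun i _ => ⟨?_, fun h => ⟨_, h, ?_⟩⟩) Iff.rfl
  · rintro ⟨v, hv, hle⟩
    rwa [← (Finsupp.sup_tsub_le_single_one_iff (hdegree v hv)).1 hle]
  · exact (Finsupp.sup_tsub_le_single_one_iff (hdegree _ h)).2 rfl

/-- Let `I` be a monomial ideal generated in degree `d` (with minimal
monomial generating set `S`) and `u` a monomial of degree `d − 1`.  Then `I : u` is
generated by variables if and only if there exists a subset `A ⊆ [n]` such that
`u·x_i ∈ G(I)` for all `i ∈ A` and for every `v ∈ G(I)`,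
`supp(lcm(v,u)/u) ∩ A ≠ ∅`.  (Such a `u` is called strongly linear over `I`.) -/
theorem stmt_13 {K : Type} [Field K] {n d : ℕ} (hd : 1 ≤ d) (S : Set (Fin n →₀ ℕ))
    (hmin : IsMinGenSet S) (hdeg : ∀ v ∈ S, mdeg v = d)
    (u : Fin n →₀ ℕ) (hu : mdeg u = d - 1) :
    genByVars (Submodule.colon (monIdeal K S) (Ideal.span {mon K u}))
    ↔ ∃ A : Set (Fin n), (∀ i ∈ A, u + Finsupp.single i 1 ∈ S) ∧
        ∀ v ∈ S, ∃ i ∈ A, i ∈ ((v ⊔ u) - u).support :=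
  stmt_13_general hd S hdeg u hu
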